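/- Let {p_{n,k} : n ≥ 0, 0 ≤ k < 2ⁿ} be nonnegative reals such that there is S with Σ p_{q,j}·|I_{q,j}| ≤ S over every finite family of pairwise disjoint dyadic arcs. Define p̃_{n,k} = (1/|I_{n,k}|)·sup{Σ p_{q,j}·|I_{q,j}|}, the supremum over all finite families of pairwise disjoint dyadic arcs {I_{q,j}} contained in I_{n,k}. Then each p̃_{n,k} is finite, p̃_{n,k} ≥ p_{n,k}, and the discrete superharmonicity property p̃_{n,k} ≥ (1/2)·(p̃_{n+1,2k} + p̃_{n+1,2k+1}) holds for all n,k. -/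

import Mathlib

open MeasureTheory Filter Set

noncomputable section

/-- The dyadic arc `I_{n,k} = {e^{iθ} : θ ∈ [2πk 2^{−n}, 2π(k+1) 2^{−n})}` of the unit circle
(for `0 ≤ k < 2ⁿ`); its arc length is `|I_{n,k}| = 2π 2^{−n}`. -/
def dyadicArc (n k : ℕ) : Set ℂ :=
  (fun θ : ℝ => Complex.exp (θ * Complex.I)) ''
    Set.Ico (2 * Real.pi * k / 2 ^ n) (2 * Real.pi * (k + 1) / 2 ^ n)

/-- The set of sums `Σ p_{q,j} |I_{q,j}|` over finite families of pairwise disjoint dyadic arcs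
contained in `I_{n,k}`. -/
def dyadicSums (p : ℕ → ℕ → ℝ) (n k : ℕ) : Set ℝ :=
  {x : ℝ | ∃ F : Finset (ℕ × ℕ), (∀ q ∈ F, q.2 < 2 ^ q.1) ∧
    (∀ q ∈ F, dyadicArc q.1 q.2 ⊆ dyadicArc n k) ∧
    (∀ q ∈ F, ∀ r ∈ F, q ≠ r → Disjoint (dyadicArc q.1 q.2) (dyadicArc r.1 r.2)) ∧
    x = ∑ q ∈ F, p q.1 q.2 * (2 * Real.pi / 2 ^ q.1)}

/-- `p̃_{n,k} = |I_{n,k}|⁻¹ sup Σ p_{q,j} |I_{q,j}|`, the supremum over finite families of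
pairwise disjoint dyadic arcs contained in `I_{n,k}`. -/
def ptilde (p : ℕ → ℕ → ℝ) (n k : ℕ) : ℝ :=
  (2 * Real.pi / 2 ^ n)⁻¹ * sSup (dyadicSums p n k)

lemma expI_injOn : Set.InjOn (fun θ : ℝ => Complex.exp (θ * Complex.I))
    (Set.Ico 0 (2 * Real.pi)) := by
  intro x hx y hy h
  simp only [Complex.exp_eq_exp_iff_exists_int] at h
  obtain ⟨m, hm⟩ := h
  have h2 : ((x : ℂ)) * Complex.I = ((y + m * (2 * Real.pi) : ℝ) : ℂ) * Complex.I := by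
    push_cast
    linear_combination hm
  have h3 : (x : ℝ) = y + m * (2 * Real.pi) := by
    have h4 := mul_right_cancel₀ (b := Complex.I) Complex.I_ne_zero h2
    exact_mod_cast h4
  have hπ := Real.pi_pos
  have hm0 : m = 0 := by
    have hlt : |(m : ℝ)| < 1 := by
      rw [abs_lt]
      constructor <;> nlinarith [hx.1, hx.2, hy.1, hy.2]
    have hm1 : |m| < 1 := by exact_mod_cast (by rwa [← Int.cast_abs] at hlt : ((|m| : ℤ) : ℝ) < 1)
    rcases abs_lt.mp hm1 with ⟨h1, h2⟩
    omega
  simp [hm0] at h3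
  exact h3

lemma arc_nonempty (n k : ℕ) : (dyadicArc n k).Nonempty := by
  refine ⟨_, ⟨2 * Real.pi * k / 2 ^ n, ⟨le_refl _, ?_⟩, rfl⟩⟩
  have hπ := Real.pi_pos
  have h2 : (0:ℝ) < 2 ^ n := by positivity
  rw [div_lt_div_iff₀ h2 h2]
  nlinarith

lemma subset_left (n k : ℕ) : dyadicArc (n+1) (2*k) ⊆ dyadicArc n k := by
  apply Set.image_mono
  apply Set.Ico_subset_Ico
  · apply le_of_eq
    push_cast
    rw [pow_succ]
    field_simp
  · push_cast
    rw [pow_succ, div_le_div_iff₀ (by positivity) (by positivity)]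
    nlinarith [Real.pi_pos, pow_pos (by norm_num : (0:ℝ) < 2) n]

lemma subset_right (n k : ℕ) : dyadicArc (n+1) (2*k+1) ⊆ dyadicArc n k := by
  apply Set.image_mono
  apply Set.Ico_subset_Ico
  · push_cast
    rw [pow_succ, div_le_div_iff₀ (by positivity) (by positivity)]
    nlinarith [Real.pi_pos, pow_pos (by norm_num : (0:ℝ) < 2) n]
  · apply le_of_eq
    push_cast
    rw [pow_succ]
    field_simp
    ring

lemma halves_disjoint (n k : ℕ) (hk : k < 2 ^ n) :
    Disjoint (dyadicArc (n+1) (2*k)) (dyadicArc (n+1) (2*k+1)) := by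
  have hπ := Real.pi_pos
  have h2 : (0:ℝ) < 2 ^ (n+1) := by positivity
  have hk' : (2*k+2 : ℝ) ≤ 2 ^ (n+1) := by
    have h : (2*k+2 : ℕ) ≤ 2 ^ (n+1) := by
      rw [pow_succ]
      omega
    exact_mod_cast h
  rw [Set.disjoint_left]
  rintro z ⟨θ₁, hθ₁, rfl⟩ ⟨θ₂, hθ₂, heq⟩
  have hθ₁' : θ₁ ∈ Set.Ico (0:ℝ) (2 * Real.pi) := by
    constructor
    · refine le_trans ?_ hθ₁.1
      positivity
    · refine lt_of_lt_of_le hθ₁.2 ?_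
      rw [div_le_iff₀ h2]
      push_cast
      nlinarith
  have hθ₂' : θ₂ ∈ Set.Ico (0:ℝ) (2 * Real.pi) := by
    constructor
    · refine le_trans ?_ hθ₂.1
      positivity
    · refine lt_of_lt_of_le hθ₂.2 ?_
      rw [div_le_iff₀ h2]
      push_cast
      nlinarith
  have := expI_injOn hθ₁' hθ₂' heq.symm
  subst this
  have h1 := hθ₁.2
  have h2' := hθ₂.1
  push_cast at h1 h2'
  linarith

/-- If the sums `Σ p_{q,j} |I_{q,j}|` over disjoint families of dyadic arcs are
uniformly bounded by `S`, then each `p̃_{n,k}` is finite (the defining set of sums is bounded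
above), `p̃_{n,k} ≥ p_{n,k}`, and the discrete superharmonicity
`p̃_{n,k} ≥ (p̃_{n+1,2k} + p̃_{n+1,2k+1})/2` holds. -/
theorem statement8 (p : ℕ → ℕ → ℝ) (hp : ∀ n k, k < 2 ^ n → 0 ≤ p n k) (S : ℝ)
    (hS : ∀ F : Finset (ℕ × ℕ), (∀ q ∈ F, q.2 < 2 ^ q.1) →
      (∀ q ∈ F, ∀ r ∈ F, q ≠ r → Disjoint (dyadicArc q.1 q.2) (dyadicArc r.1 r.2)) →
      ∑ q ∈ F, p q.1 q.2 * (2 * Real.pi / 2 ^ q.1) ≤ S) :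
    ∀ n k, k < 2 ^ n →
      BddAbove (dyadicSums p n k) ∧
      p n k ≤ ptilde p n k ∧
      (1 / 2) * (ptilde p (n + 1) (2 * k) + ptilde p (n + 1) (2 * k + 1)) ≤ ptilde p n k := by
  have hbdd : ∀ n k, BddAbove (dyadicSums p n k) := fun n k =>
    ⟨S, fun x hx => by
      obtain ⟨F, h1, _, h3, rfl⟩ := hx
      exact hS F h1 h3⟩
  have hne : ∀ n k, (dyadicSums p n k).Nonempty := fun n k =>
    ⟨0, ∅, by simp, by simp, by simp, by simp⟩
  intro n k hk
  have hπ := Real.pi_pos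
  have hc : (0:ℝ) < 2 * Real.pi / 2 ^ n := by positivity
  refine ⟨hbdd n k, ?_, ?_⟩
  · have hself : p n k * (2 * Real.pi / 2 ^ n) ∈ dyadicSums p n k := by
      refine ⟨{(n, k)}, ?_, ?_, ?_, ?_⟩
      · intro q hq; simp at hq; subst hq; exact hk
      · intro q hq; simp at hq; subst hq; exact subset_rfl
      · intro q hq r hr hqr; simp at hq hr; subst hq; subst hr; exact absurd rfl hqr
      · simp
    have h1 := le_csSup (hbdd n k) hself
    calc p n k = (2 * Real.pi / 2 ^ n)⁻¹ * (p n k * (2 * Real.pi / 2 ^ n)) := by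
          field_simp
      _ ≤ (2 * Real.pi / 2 ^ n)⁻¹ * sSup (dyadicSums p n k) :=
          mul_le_mul_of_nonneg_left h1 (le_of_lt (inv_pos.mpr hc))
  · have key : ∀ x ∈ dyadicSums p (n+1) (2*k), ∀ y ∈ dyadicSums p (n+1) (2*k+1),
        x + y ∈ dyadicSums p n k := by
      rintro x ⟨F1, hF1a, hF1b, hF1c, rfl⟩ y ⟨F2, hF2a, hF2b, hF2c, rfl⟩
      have hhd := halves_disjoint n k hk
      have hdisjF : Disjoint F1 F2 := by
        rw [Finset.disjoint_left]
        intro q hq1 hq2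
        have h := Set.disjoint_of_subset (hF1b q hq1) (hF2b q hq2) hhd
        obtain ⟨z, hz⟩ := arc_nonempty q.1 q.2
        exact absurd rfl (h.ne_of_mem hz hz)
      refine ⟨F1 ∪ F2, ?_, ?_, ?_, ?_⟩
      · intro q hq
        rcases Finset.mem_union.mp hq with h | h
        exacts [hF1a q h, hF2a q h]
      · intro q hq
        rcases Finset.mem_union.mp hq with h | h
        · exact (hF1b q h).trans (subset_left n k)
        · exact (hF2b q h).trans (subset_right n k)
      · intro q hq r hr hqr
        rcases Finset.mem_union.mp hq with h1 | h1 <;>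
          rcases Finset.mem_union.mp hr with h2 | h2
        · exact hF1c q h1 r h2 hqr
        · exact Set.disjoint_of_subset (hF1b q h1) (hF2b r h2) hhd
        · exact (Set.disjoint_of_subset (hF1b r h2) (hF2b q h1) hhd).symm
        · exact hF2c q h1 r h2 hqr
      · rw [Finset.sum_union hdisjF]
    have hsum : sSup (dyadicSums p (n+1) (2*k)) + sSup (dyadicSums p (n+1) (2*k+1)) ≤
        sSup (dyadicSums p n k) := by
      have h1 : sSup (dyadicSums p (n+1) (2*k)) ≤
          sSup (dyadicSums p n k) - sSup (dyadicSums p (n+1) (2*k+1)) := by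
        apply csSup_le (hne _ _)
        intro x hx
        have h2 : sSup (dyadicSums p (n+1) (2*k+1)) ≤ sSup (dyadicSums p n k) - x := by
          apply csSup_le (hne _ _)
          intro y hy
          have := le_csSup (hbdd n k) (key x hx y hy)
          linarith
        linarith
      linarith
    simp only [ptilde]
    have hc1 : (2 * Real.pi / 2 ^ (n+1) : ℝ)⁻¹ = 2 * (2 * Real.pi / 2 ^ n)⁻¹ := by
      rw [pow_succ]
      field_simp
    rw [hc1]
    have hinv : (0:ℝ) ≤ (2 * Real.pi / 2 ^ n)⁻¹ := le_of_lt (inv_pos.mpr hc)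
    nlinarith [mul_le_mul_of_nonneg_left hsum hinv]
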